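/- Let X be a Polish space and let (P_k) be a Feller Markov transition function with Markov semigroup 𝔓_k acting on bounded continuous functions and 𝔓_k* acting on probability measures. Suppose (i) for every bounded Lipschitz function f on X there is a constant L_f > 0 such that 𝔓_k f is L_f-Lipschitz for every k ≥ 0, and (ii) for every point z ∈ X and every open ball B ⊂ X there exists l ≥ 1 with P_l(z,B) > 0. Then 𝔓_k* has at most one stationary probability measure. -/

import Mathlib

/-!
Fix a bounded Lipschitz `f`. The Cesàro averages `(n + 1)⁻¹ ∑_{k=1}^{n+1} 𝔓_k f` are bounded
and, by the uniform Feller property, equi-Lipschitz, so a subsequence converges pointwise (on a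
countable dense set by compactness, then everywhere by equicontinuity) to a bounded Lipschitz
function `h`. Averaging telescopes under `𝔓_1`, so `h` is harmonic, and `∫ f dμ = ∫ h dμ` for
every stationary `μ`.

A bounded continuous harmonic `h` is constant as soon as one stationary `μ` exists: the variance
of `h` under `P_1(z, ·)` is `𝔓_1 (h²) z - h(z)²`, whose `μ`-integral vanishes by stationarity, so
for `μ`-a.e. `z₀` the function `h` equals `h(z₀)` `P_n(z₀, ·)`-a.s. for all `n`. The open set
`{h ≠ h(z₀)}` is then charged by no `P_n(z₀, ·)`, so by irreducibility it is empty. Hence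
`∫ f dμ` does not depend on the stationary `μ`, and bounded Lipschitz functions determine a
finite Borel measure.
-/

open MeasureTheory Metric Filter ProbabilityTheory Finset
open scoped NNReal Topology

theorem MeasureTheory.ext_of_forall_lipschitz_integral_eq {Ω : Type*} [MeasurableSpace Ω]
    [PseudoEMetricSpace Ω] [BorelSpace Ω] {μ ν : Measure Ω} [IsFiniteMeasure μ]
    [IsFiniteMeasure ν]
    (h : ∀ f : Ω → ℝ, (∃ C, ∀ x, |f x| ≤ C) → (∃ K, LipschitzWith K f) →
      ∫ x, f x ∂μ = ∫ x, f x ∂ν) :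
    μ = ν := by
  have hδ (n : ℕ) : 0 < (1 : ℝ) / (n + 1) := Nat.one_div_pos_of_nat
  have hclosed {F : Set Ω} (hF : IsClosed F) : μ F = ν F := by
    rw [← measureReal_eq_measureReal_iff]
    refine tendsto_nhds_unique (tendsto_integral_thickenedIndicator_of_isClosed μ hF hδ
      tendsto_one_div_add_atTop_nhds_zero_nat) ?_
    convert tendsto_integral_thickenedIndicator_of_isClosed ν hF hδ
      tendsto_one_div_add_atTop_nhds_zero_nat using 2 with n
    refine h _ ⟨1, fun x => ?_⟩ ⟨_, lipschitzWith_thickenedIndicator (hδ n) F⟩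
    simpa using thickenedIndicator_le_one (hδ n) F x
  exact ext_of_generate_finite _ (borel_eq_generateFrom_isClosed (α := Ω) ▸
    BorelSpace.measurable_eq) isPiSystem_isClosed (fun F hF => hclosed hF)
    (hclosed isClosed_univ)

lemma cauchySeq_of_lipschitzWith_of_dense {X : Type*} [PseudoMetricSpace X] {L : ℝ≥0}
    {g : ℕ → X → ℝ} (hg : ∀ n, LipschitzWith L (g n)) {s : Set X} (hs : Dense s)
    (hcauchy : ∀ y ∈ s, CauchySeq fun n => g n y) (x : X) :
    CauchySeq fun n => g n x := by
  rw [Metric.cauchySeq_iff]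
  intro ε hε
  obtain ⟨y, hys, hxy⟩ := hs.exists_dist_lt x (show 0 < ε / (3 * (L + 1)) by positivity)
  obtain ⟨N, hN⟩ := Metric.cauchySeq_iff.1 (hcauchy y hys) (ε / 3) (by positivity)
  have hclose (n : ℕ) : dist (g n x) (g n y) ≤ ε / 3 := calc
    dist (g n x) (g n y) ≤ L * dist x y := (hg n).dist_le_mul x y
    _ ≤ (L + 1) * (ε / (3 * (L + 1))) := by gcongr; linarith
    _ = ε / 3 := by field_simp
  refine ⟨N, fun m hm n hn => ?_⟩
  calc dist (g m x) (g n x)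
      ≤ dist (g m x) (g m y) + dist (g m y) (g n y) + dist (g n y) (g n x) :=
        dist_triangle4 _ _ _ _
    _ < ε / 3 + ε / 3 + ε / 3 := by
        linarith [hclose m, dist_comm (g n y) (g n x) ▸ hclose n, hN m hm n hn]
    _ = ε := by ring

lemma exists_subseq_tendsto_of_lipschitzWith {X : Type*} [PseudoMetricSpace X]
    [TopologicalSpace.SeparableSpace X] {L : ℝ≥0} {C : ℝ} {g : ℕ → X → ℝ}
    (hg : ∀ n, LipschitzWith L (g n)) (hgC : ∀ n x, |g n x| ≤ C) :
    ∃ h : X → ℝ, ∃ φ : ℕ → ℕ, StrictMono φ ∧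
      ∀ x, Tendsto (fun n => g (φ n) x) atTop (𝓝 (h x)) := by
  obtain ⟨s, hsc, hsd⟩ := TopologicalSpace.exists_countable_dense X
  have := hsc.to_subtype
  have hK : IsCompact (Set.univ.pi fun _ : s => Set.Icc (-C) C) :=
    isCompact_univ_pi fun _ => isCompact_Icc
  obtain ⟨_, _, φ, hφ, hlim⟩ := hK.tendsto_subseq (x := fun n (y : s) => g n y)
    fun n y _ => abs_le.1 (hgC n y)
  have hcauchy : ∀ y ∈ s, CauchySeq fun n => g (φ n) y := fun y hy =>
    (tendsto_pi_nhds.1 hlim ⟨y, hy⟩).cauchySeq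
  choose h hh using fun x => cauchySeq_tendsto_of_complete
    (cauchySeq_of_lipschitzWith_of_dense (fun n => hg (φ n)) hsd hcauchy x)
  exact ⟨h, φ, hφ, hh⟩

lemma MeasureTheory.abs_integral_le_of_abs_le {X : Type*} [MeasurableSpace X] {μ : Measure X}
    [IsProbabilityMeasure μ] {f : X → ℝ} {C : ℝ} (hC : ∀ x, |f x| ≤ C) :
    |∫ x, f x ∂μ| ≤ C := by
  simpa using norm_integral_le_of_norm_le_const (μ := μ) (f := f) (ae_of_all _ hC)

namespace ProbabilityTheory

variable {X Y Z : Type*} [MeasurableSpace X] [MeasurableSpace Y] [MeasurableSpace Z]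

instance IsMarkovKernel.pow (κ : Kernel X X) [IsMarkovKernel κ] (n : ℕ) :
    IsMarkovKernel (κ ^ n) := by
  induction n with
  | zero => exact (inferInstance : IsMarkovKernel Kernel.id)
  | succ n ih => rw [pow_succ]; exact (inferInstance : IsMarkovKernel ((κ ^ n) ∘ₖ κ))

namespace Kernel

lemma integral_comp_of_abs_le (κ : Kernel X Y) [IsFiniteKernel κ] (η : Kernel Y Z)
    [IsFiniteKernel η] {f : Z → ℝ} (hf : Measurable f) {C : ℝ} (hC : ∀ z, |f z| ≤ C) (x : X) :
    ∫ z, f z ∂(η ∘ₖ κ) x = ∫ y, ∫ z, f z ∂η y ∂κ x :=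
  integral_comp (Integrable.of_bound hf.aestronglyMeasurable C (ae_of_all _ hC))

lemma _root_.MeasureTheory.Measure.integral_comp_of_abs_le (μ : Measure Y) [IsFiniteMeasure μ]
    (η : Kernel Y Z) [IsFiniteKernel η] {f : Z → ℝ} (hf : Measurable f) {C : ℝ}
    (hC : ∀ z, |f z| ≤ C) :
    ∫ z, f z ∂(η ∘ₘ μ) = ∫ y, ∫ z, f z ∂η y ∂μ := by
  rw [Measure.comp_eq_comp_const_apply, Kernel.integral_comp_of_abs_le _ η hf hC, const_apply]

lemma integrable_integral_of_abs_le (η : Kernel X Y) [IsMarkovKernel η] {μ : Measure X}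
    [IsFiniteMeasure μ] {f : Y → ℝ} (hf : Measurable f) {C : ℝ} (hC : ∀ y, |f y| ≤ C) :
    Integrable (fun x => ∫ y, f y ∂η x) μ :=
  Integrable.of_bound hf.stronglyMeasurable.integral_kernel.aestronglyMeasurable C
    (ae_of_all _ fun _ => abs_integral_le_of_abs_le hC)

lemma Invariant.integral_integral {κ : Kernel X X} [IsFiniteKernel κ] {μ : Measure X}
    [IsFiniteMeasure μ] (hμ : κ.Invariant μ) {f : X → ℝ} (hf : Measurable f) {C : ℝ}
    (hC : ∀ x, |f x| ≤ C) :
    ∫ x, ∫ y, f y ∂κ x ∂μ = ∫ x, f x ∂μ := by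
  rw [← Measure.integral_comp_of_abs_le μ κ hf hC]
  exact congrArg (fun ν => ∫ x, f x ∂ν) hμ

lemma Invariant.pow {κ : Kernel X X} [IsSFiniteKernel κ] {μ : Measure X}
    (hμ : κ.Invariant μ) (n : ℕ) :
    (κ ^ n).Invariant μ := by
  induction n with
  | zero => exact Measure.id_comp
  | succ n ih => rw [pow_succ]; exact ih.comp hμ

section Cesaro

noncomputable def cesaroAverage (κ : Kernel X X) (f : X → ℝ) (n : ℕ) (z : X) : ℝ :=
  (n + 1 : ℝ)⁻¹ * ∑ k ∈ range (n + 1), ∫ y, f y ∂(κ ^ (k + 1)) z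

variable {κ : Kernel X X} {f : X → ℝ} {C : ℝ}

lemma measurable_cesaroAverage (hf : Measurable f) (n : ℕ) :
    Measurable (cesaroAverage κ f n) :=
  (Finset.measurable_sum _ fun _ _ =>
    hf.stronglyMeasurable.integral_kernel.measurable).const_mul _

lemma lipschitzWith_cesaroAverage [PseudoMetricSpace X] {L : ℝ≥0}
    (hL : ∀ k, LipschitzWith L fun z => ∫ y, f y ∂(κ ^ (k + 1)) z) (n : ℕ) :
    LipschitzWith L (cesaroAverage κ f n) := by
  refine LipschitzWith.of_dist_le_mul fun z w => ?_
  have hn : (0 : ℝ) < n + 1 := by positivity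
  rw [cesaroAverage, cesaroAverage, Real.dist_eq, ← mul_sub, abs_mul, abs_inv, abs_of_pos hn,
    inv_mul_le_iff₀ hn, ← Real.dist_eq]
  calc dist (∑ k ∈ range (n + 1), ∫ y, f y ∂(κ ^ (k + 1)) z)
        (∑ k ∈ range (n + 1), ∫ y, f y ∂(κ ^ (k + 1)) w)
      ≤ ∑ _k ∈ range (n + 1), L * dist z w :=
        dist_sum_sum_le_of_le _ fun k _ => (hL k).dist_le_mul z w
    _ = (n + 1) * (L * dist z w) := by simp

variable [IsMarkovKernel κ]

lemma abs_cesaroAverage_le (hC : ∀ x, |f x| ≤ C) (n : ℕ) (z : X) :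
    |cesaroAverage κ f n z| ≤ C := by
  have hn : (0 : ℝ) < n + 1 := by positivity
  rw [cesaroAverage, abs_mul, abs_inv, abs_of_pos hn, inv_mul_le_iff₀ hn]
  calc |∑ k ∈ range (n + 1), ∫ y, f y ∂(κ ^ (k + 1)) z|
      ≤ ∑ k ∈ range (n + 1), |∫ y, f y ∂(κ ^ (k + 1)) z| := abs_sum_le_sum_abs _ _
    _ ≤ ∑ _k ∈ range (n + 1), C := sum_le_sum fun k _ => abs_integral_le_of_abs_le hC
    _ = (n + 1) * C := by simp

lemma integral_cesaroAverage {μ : Measure X} [IsFiniteMeasure μ] (hf : Measurable f)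
    (hC : ∀ x, |f x| ≤ C) (n : ℕ) :
    ∫ z, cesaroAverage κ f n z ∂μ =
      (n + 1 : ℝ)⁻¹ * ∑ k ∈ range (n + 1), ∫ z, ∫ y, f y ∂(κ ^ (k + 1)) z ∂μ := by
  rw [← integral_finsetSum _ fun k _ => integrable_integral_of_abs_le (κ ^ (k + 1)) hf hC,
    ← integral_const_mul]
  rfl

lemma integral_cesaroAverage_of_invariant {μ : Measure X} [IsProbabilityMeasure μ]
    (hμ : κ.Invariant μ) (hf : Measurable f) (hC : ∀ x, |f x| ≤ C) (n : ℕ) :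
    ∫ z, cesaroAverage κ f n z ∂μ = ∫ x, f x ∂μ := by
  have hterm (k : ℕ) := (hμ.pow (k + 1)).integral_integral hf hC
  simp_rw [integral_cesaroAverage hf hC, hterm, Finset.sum_const, card_range, nsmul_eq_mul]
  push_cast
  field_simp

lemma integral_cesaroAverage_apply (hf : Measurable f) (hC : ∀ x, |f x| ≤ C) (n : ℕ) (z : X) :
    ∫ y, cesaroAverage κ f n y ∂κ z = cesaroAverage κ f n z +
      (n + 1 : ℝ)⁻¹ * (∫ y, f y ∂(κ ^ (n + 2)) z - ∫ y, f y ∂(κ ^ 1) z) := by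
  have hstep (k : ℕ) : ∫ x, ∫ y, f y ∂(κ ^ (k + 1)) x ∂κ z = ∫ y, f y ∂(κ ^ (k + 2)) z := by
    rw [pow_succ _ (k + 1), ← Kernel.integral_comp_of_abs_le κ _ hf hC]
    rfl
  set Q : ℕ → ℝ := fun k => ∫ y, f y ∂(κ ^ k) z
  have htelescope :
      ∑ k ∈ range (n + 1), Q (k + 2) + Q 1 = ∑ k ∈ range (n + 1), Q (k + 1) + Q (n + 2) :=
    (sum_range_succ' (fun k => Q (k + 1)) (n + 1)).symm.trans (sum_range_succ _ _)
  rw [integral_cesaroAverage hf hC, cesaroAverage]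
  simp_rw [hstep]
  linear_combination (n + 1 : ℝ)⁻¹ * htelescope

lemma tendsto_integral_cesaroAverage (hf : Measurable f) (hC : ∀ x, |f x| ≤ C) {φ : ℕ → ℕ}
    {h : X → ℝ} (hlim : ∀ z, Tendsto (fun n => cesaroAverage κ f (φ n) z) atTop (𝓝 (h z)))
    (μ : Measure X) [IsFiniteMeasure μ] :
    Tendsto (fun n => ∫ z, cesaroAverage κ f (φ n) z ∂μ) atTop (𝓝 (∫ z, h z ∂μ)) :=
  tendsto_integral_of_dominated_convergence (fun _ => C)
    (fun _ => (measurable_cesaroAverage hf _).aestronglyMeasurable) (integrable_const C)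
    (fun _ => ae_of_all _ (abs_cesaroAverage_le hC _)) (ae_of_all _ hlim)

lemma integral_eq_of_tendsto_cesaroAverage (hf : Measurable f) (hC : ∀ x, |f x| ≤ C)
    {φ : ℕ → ℕ} {h : X → ℝ}
    (hlim : ∀ z, Tendsto (fun n => cesaroAverage κ f (φ n) z) atTop (𝓝 (h z)))
    {μ : Measure X} [IsProbabilityMeasure μ] (hμ : κ.Invariant μ) :
    ∫ x, f x ∂μ = ∫ x, h x ∂μ := by
  have := tendsto_integral_cesaroAverage hf hC hlim μ
  simp_rw [integral_cesaroAverage_of_invariant hμ hf hC] at this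
  exact tendsto_nhds_unique tendsto_const_nhds this

end Cesaro

section Harmonic

def IsHarmonic (κ : Kernel X X) (h : X → ℝ) : Prop :=
  ∀ z, ∫ y, h y ∂κ z = h z

variable {κ : Kernel X X} [IsMarkovKernel κ] {h : X → ℝ} {C : ℝ}

lemma IsHarmonic.pow (hh : IsHarmonic κ h) (hm : Measurable h) (hC : ∀ x, |h x| ≤ C) (n : ℕ) :
    IsHarmonic (κ ^ n) h := by
  induction n with
  | zero => exact fun z => integral_dirac' h z hm.stronglyMeasurable
  | succ n ih =>
    intro z
    rw [pow_succ', show κ * κ ^ n = κ ∘ₖ (κ ^ n) from rfl,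
      Kernel.integral_comp_of_abs_le _ _ hm hC]
    exact (integral_congr_ae (ae_of_all _ hh)).trans (ih z)

lemma IsHarmonic.ae_ae_eq_of_invariant (hh : IsHarmonic κ h) (hm : Measurable h)
    (hC : ∀ x, |h x| ≤ C) {μ : Measure X} [IsProbabilityMeasure μ] (hμ : κ.Invariant μ) :
    ∀ᵐ z ∂μ, ∀ᵐ y ∂κ z, h y = h z := by
  have hL2 (ν : Measure X) [IsFiniteMeasure ν] : MemLp h 2 ν :=
    MemLp.of_bound hm.aestronglyMeasurable C (ae_of_all _ hC)
  have hsq (x : X) : |h x ^ 2| ≤ C ^ 2 := by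
    rw [abs_pow]
    exact pow_le_pow_left₀ (abs_nonneg _) (hC x) 2
  have hvar : (fun z => Var[h; κ z]) = fun z => ∫ y, h y ^ 2 ∂κ z - h z ^ 2 := by
    ext z
    rw [variance_eq_sub (hL2 _), hh z]
    rfl
  have hint₁ := integrable_integral_of_abs_le κ (μ := μ) (hm.pow_const 2) hsq
  have hint₂ := Integrable.of_bound (μ := μ) (hm.pow_const 2).aestronglyMeasurable _
    (ae_of_all _ hsq)
  have hzero : ∫ z, Var[h; κ z] ∂μ = 0 := by
    rw [hvar, integral_sub hint₁ hint₂, hμ.integral_integral (hm.pow_const 2) hsq, sub_self]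
  filter_upwards [(integral_eq_zero_iff_of_nonneg (fun z => variance_nonneg _ _)
    (hvar ▸ hint₁.sub hint₂)).1 hzero] with z hz
  simpa [hh z] using ae_eq_integral_of_variance_eq_zero (hL2 _) hz

lemma isHarmonic_of_tendsto_cesaroAverage {f : X → ℝ} (hf : Measurable f)
    (hC : ∀ x, |f x| ≤ C) {φ : ℕ → ℕ} (hφ : Tendsto φ atTop atTop)
    (hlim : ∀ z, Tendsto (fun n => cesaroAverage κ f (φ n) z) atTop (𝓝 (h z))) :
    IsHarmonic κ h := by
  intro z
  set Q : ℕ → ℝ := fun k => ∫ y, f y ∂(κ ^ k) z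
  have hinv : Tendsto (fun n => ((φ n : ℝ) + 1)⁻¹) atTop (𝓝 0) :=
    tendsto_inv_atTop_zero.comp
      (tendsto_atTop_add_const_right _ 1 (tendsto_natCast_atTop_atTop.comp hφ))
  have hbdd : IsBoundedUnder (· ≤ ·) atTop fun n => ‖Q (φ n + 2) - Q 1‖ :=
    isBoundedUnder_of ⟨C + C, fun n => (abs_sub _ _).trans
      (add_le_add (abs_integral_le_of_abs_le hC) (abs_integral_le_of_abs_le hC))⟩
  refine tendsto_nhds_unique (tendsto_integral_cesaroAverage hf hC hlim (κ z)) ?_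
  simp_rw [integral_cesaroAverage_apply hf hC]
  simpa [Q] using (hlim z).add (hinv.zero_mul_isBoundedUnder_le hbdd)

lemma exists_isHarmonic_integral_eq [PseudoMetricSpace X] [TopologicalSpace.SeparableSpace X]
    {f : X → ℝ} (hf : Measurable f) (hC : ∀ x, |f x| ≤ C) {L : ℝ≥0}
    (hL : ∀ k, LipschitzWith L fun z => ∫ y, f y ∂(κ ^ (k + 1)) z) :
    ∃ h : X → ℝ, IsHarmonic κ h ∧ Continuous h ∧ (∀ x, |h x| ≤ C) ∧
      ∀ (μ : Measure X) [IsProbabilityMeasure μ], κ.Invariant μ →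
        ∫ x, f x ∂μ = ∫ x, h x ∂μ := by
  obtain ⟨h, φ, hφ, hlim⟩ := exists_subseq_tendsto_of_lipschitzWith
    (lipschitzWith_cesaroAverage hL) (abs_cesaroAverage_le hC)
  have hLip : LipschitzWith L h := (isClosed_setOfPred_lipschitzWith L).mem_of_tendsto
    (tendsto_pi_nhds.2 hlim) (Eventually.of_forall fun n => lipschitzWith_cesaroAverage hL (φ n))
  exact ⟨h, isHarmonic_of_tendsto_cesaroAverage hf hC hφ.tendsto_atTop hlim, hLip.continuous,
    fun x => le_of_tendsto (hlim x).abs (Eventually.of_forall fun n => abs_cesaroAverage_le hC _ x),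
    fun μ _ hμ => integral_eq_of_tendsto_cesaroAverage hf hC hlim hμ⟩

end Harmonic

section Irreducible

variable [PseudoMetricSpace X] {κ : Kernel X X} {h : X → ℝ}

def IsTopologicallyIrreducible (κ : Kernel X X) : Prop :=
  ∀ z x, ∀ r > 0, ∃ n, 0 < (κ ^ n) z (ball x r)

lemma IsTopologicallyIrreducible.eq_of_forall_ae_eq (hκ : IsTopologicallyIrreducible κ)
    (hc : Continuous h) {z : X} {c : ℝ} (hae : ∀ n, ∀ᵐ y ∂(κ ^ n) z, h y = c) (x : X) :
    h x = c := by
  by_contra hx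
  obtain ⟨r, hr, hball⟩ := Metric.isOpen_iff.1 (isOpen_ne_fun hc continuous_const) x hx
  obtain ⟨n, hn⟩ := hκ z x r hr
  exact hn.ne' (measure_mono_null hball (ae_iff.1 (hae n)))

theorem IsHarmonic.exists_eq_const [OpensMeasurableSpace X] [IsMarkovKernel κ]
    (hκ : IsTopologicallyIrreducible κ) (hh : IsHarmonic κ h) (hc : Continuous h) {C : ℝ}
    (hC : ∀ x, |h x| ≤ C) {μ : Measure X} [IsProbabilityMeasure μ] (hμ : κ.Invariant μ) :
    ∃ c, ∀ x, h x = c := by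
  have hae : ∀ᵐ z ∂μ, ∀ n, ∀ᵐ y ∂(κ ^ n) z, h y = h z := ae_all_iff.2 fun n =>
    (hh.pow hc.measurable hC n).ae_ae_eq_of_invariant hc.measurable hC (hμ.pow n)
  obtain ⟨z, hz⟩ := hae.exists
  exact ⟨h z, hκ.eq_of_forall_ae_eq hc hz⟩

theorem eq_of_invariant [TopologicalSpace.SeparableSpace X] [BorelSpace X] [IsMarkovKernel κ]
    (hFeller : ∀ f : X → ℝ, (∃ C, ∀ x, |f x| ≤ C) → (∃ K, LipschitzWith K f) →
      ∃ L, ∀ k, LipschitzWith L fun z => ∫ y, f y ∂(κ ^ (k + 1)) z)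
    (hκ : IsTopologicallyIrreducible κ) {μ ν : Measure X} [IsProbabilityMeasure μ]
    [IsProbabilityMeasure ν] (hμ : κ.Invariant μ) (hν : κ.Invariant ν) :
    μ = ν := by
  refine ext_of_forall_lipschitz_integral_eq fun f ⟨C, hC⟩ ⟨K, hK⟩ => ?_
  obtain ⟨L, hL⟩ := hFeller f ⟨C, hC⟩ ⟨K, hK⟩
  obtain ⟨h, hh, hc, hhC, hint⟩ := exists_isHarmonic_integral_eq hK.continuous.measurable hC hL
  obtain ⟨c, hc⟩ := hh.exists_eq_const hκ hc hhC hμ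
  simp [hint μ hμ, hint ν hν, hc]

end Irreducible

end Kernel

end ProbabilityTheory

/-- Uniqueness of stationary measures for a Feller Markov transition function on a Polish
space, under the uniform Feller property (Cesàro equicontinuity on bounded Lipschitz
functions) and topological irreducibility. `P k z` is the transition probability at time
`k` starting from `z`; it satisfies the Chapman–Kolmogorov relation. -/
theorem stmt_0 {X : Type*} [MetricSpace X] [PolishSpace X]
    [MeasurableSpace X] [BorelSpace X]
    (P : ℕ → X → Measure X)
    (hprob : ∀ k z, IsProbabilityMeasure (P k z))
    (hmeas : ∀ k {Γ : Set X}, MeasurableSet Γ → Measurable fun z => P k z Γ)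
    (hCK : ∀ k l z {Γ : Set X}, MeasurableSet Γ →
      P (k + l) z Γ = ∫⁻ y, P l y Γ ∂(P k z))
    -- (i) uniform Feller property: for every bounded Lipschitz `f` there is `L_f > 0`
    -- such that every `𝔓_k f = z ↦ ∫ f d(P k z)` is `L_f`-Lipschitz
    (hFeller : ∀ f : X → ℝ, (∃ Cb : ℝ, ∀ z, |f z| ≤ Cb) → (∃ K : ℝ≥0, LipschitzWith K f) →
      ∃ L : ℝ≥0, 0 < L ∧ ∀ k : ℕ, LipschitzWith L fun z => ∫ y, f y ∂(P k z))
    -- (ii) irreducibility: every open ball is charged at some time `l ≥ 1`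
    (hirr : ∀ z : X, ∀ x : X, ∀ r : ℝ, 0 < r → ∃ l : ℕ, 1 ≤ l ∧ 0 < P l z (ball x r))
    -- stationary measures
    (μ ν : Measure X) [IsProbabilityMeasure μ] [IsProbabilityMeasure ν]
    (hμ : ∀ {Γ : Set X}, MeasurableSet Γ → μ Γ = ∫⁻ z, P 1 z Γ ∂μ)
    (hν : ∀ {Γ : Set X}, MeasurableSet Γ → ν Γ = ∫⁻ z, P 1 z Γ ∂ν) :
    μ = ν := by
  let κ : Kernel X X := ⟨P 1, Measure.measurable_of_measurable_coe _ fun _ hs => hmeas 1 hs⟩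
  have : IsMarkovKernel κ := ⟨hprob 1⟩
  have hpow (n : ℕ) : ⇑(κ ^ (n + 1)) = P (n + 1) := by
    induction n with
    | zero => rw [zero_add, pow_one]; rfl
    | succ n ih =>
      funext z
      ext s hs
      rw [Kernel.pow_succ_apply_eq_lintegral _ _ _ hs, ih, hCK _ 1 z hs]
      rfl
  have hinv {ρ : Measure X} (hρ : ∀ {Γ : Set X}, MeasurableSet Γ → ρ Γ = ∫⁻ z, P 1 z Γ ∂ρ) :
      κ.Invariant ρ :=
    Measure.ext fun s hs => by rw [Measure.bind_apply hs κ.aemeasurable]; exact (hρ hs).symm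
  refine Kernel.eq_of_invariant (fun f hfC hfK => ?_) (fun z x r hr => ?_) (hinv hμ) (hinv hν)
  · obtain ⟨L, -, hL⟩ := hFeller f hfC hfK
    exact ⟨L, fun k => by simpa only [hpow] using hL (k + 1)⟩
  · obtain ⟨l, hl, hpos⟩ := hirr z x r hr
    obtain ⟨n, rfl⟩ := Nat.exists_eq_add_of_le' hl
    exact ⟨n + 1, by rwa [hpow]⟩
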